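/- In ℝ^d with Euclidean distance, for any finite point set S and any point x, changing a single point of S can change the K-nearest-neighbor-distance-based count Σ_{y ∈ S} 𝟙{R_{S}(y) ≥ r} by at most K γ_d, where R_S(y) is the distance from y to its K-th nearest neighbor in S \ {y} and γ_d is the minimal number of cones of angle π/6 centered at the origin needed to cover ℝ^d. Specifically: any fixed point z can be among the K nearest neighbors of at most Kγ_d points of S. -/

import Mathlib

/-!
Call `x` and `y` adjacent when `x ≠ y` and `∠ x z y < π / 3`. For adjacent `x, y` with
`dist x z ≤ dist y z`, the law of cosines makes `x` strictly closer to `y` than `z` is. So every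
`y` having `z` among its `K` nearest neighbours has fewer than `K` neighbours no farther from `z`
than itself, and a greedy colouring in order of distance from `z` splits these points into `K`
classes in which all angles at `z` are at least `π / 3`. Such a class has at most `γ_d` points:
the open cones of half-angle `π / 6` around its directions are pairwise disjoint, so their caps in
the unit ball have total volume at most that of the ball, which is covered by `γ_d` closed caps,
each of the same volume as an open one since a convex set has a null frontier. (Pigeonholing the
directions into the closed cones fails for directions on their boundaries; volumes avoid this.)
-/

open Set Real InnerProductGeometry MeasureTheory Finset
open scoped EuclideanGeometry RealInnerProductSpace

section Coloring

variable {α β : Type*} [LinearOrder β] (G : SimpleGraph α) [DecidableRel G.Adj] (r : α → β)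

theorem SimpleGraph.exists_coloring_of_card_lowerAdj_lt {K : ℕ} (B : Finset α)
    (hB : ∀ y ∈ B, #{x ∈ B | G.Adj y x ∧ r x ≤ r y} < K) :
    ∃ φ : α → ℕ, (∀ x ∈ B, φ x < K) ∧ ∀ x ∈ B, ∀ y ∈ B, G.Adj x y → φ x ≠ φ y := by
  induction B using Finset.strongInduction with
  | _ B ih =>
  classical
  rcases B.eq_empty_or_nonempty with rfl | hne
  · exact ⟨0, by simp, by simp⟩
  obtain ⟨y₀, hy₀, hmax⟩ := B.exists_max_image r hne
  obtain ⟨φ, hφK, hφ⟩ := ih (B.erase y₀) (erase_ssubset hy₀) fun y hy =>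
    (Finset.card_le_card (filter_subset_filter _ (erase_subset _ _))).trans_lt
      (hB y (mem_of_mem_erase hy))
  -- every neighbour of `y₀` in `B` lies below it, so fewer than `K` colours are blocked
  have hN : #((B.filter (G.Adj y₀)).image φ) < #(range K) := by
    refine card_image_le.trans_lt (lt_of_le_of_lt (Finset.card_le_card ?_) ((hB y₀ hy₀).trans_eq
      (card_range K).symm))
    intro x hx
    rw [mem_filter] at hx ⊢
    exact ⟨hx.1, hx.2, hmax x hx.1⟩
  obtain ⟨k, hkK, hk⟩ := exists_mem_notMem_of_card_lt_card hN
  have hfree : ∀ y ∈ B, G.Adj y₀ y → k ≠ φ y := fun y hy hadj hky =>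
    hk (mem_image.2 ⟨y, mem_filter.2 ⟨hy, hadj⟩, hky.symm⟩)
  refine ⟨Function.update φ y₀ k, fun x hx => ?_, fun x hx y hy hadj => ?_⟩
  · rcases eq_or_ne x y₀ with rfl | hxy₀
    · simpa using mem_range.1 hkK
    · simpa [hxy₀] using hφK x (mem_erase.2 ⟨hxy₀, hx⟩)
  rcases eq_or_ne x y₀ with rfl | hxy₀
  · simpa [(G.ne_of_adj hadj).symm] using hfree y hy hadj
  rcases eq_or_ne y y₀ with rfl | hyy₀
  · simpa [hxy₀] using (hfree x hx hadj.symm).symm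
  simpa [hxy₀, hyy₀] using hφ x (mem_erase.2 ⟨hxy₀, hx⟩) y (mem_erase.2 ⟨hyy₀, hy⟩) hadj

theorem SimpleGraph.card_le_mul_of_card_lowerAdj_lt {K m : ℕ} (B : Finset α)
    (hB : ∀ y ∈ B, #{x ∈ B | G.Adj y x ∧ r x ≤ r y} < K)
    (hm : ∀ A ⊆ B, G.IsIndepSet A → #A ≤ m) : #B ≤ K * m := by
  classical
  obtain ⟨φ, hφK, hφ⟩ := G.exists_coloring_of_card_lowerAdj_lt r B hB
  calc #B = ∑ k ∈ range K, #{x ∈ B | φ x = k} :=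
        card_eq_sum_card_fiberwise fun x hx => mem_range.2 (hφK x hx)
    _ ≤ ∑ _k ∈ range K, m := sum_le_sum fun k _ => hm _ (filter_subset _ _)
        fun x hx y hy _ hadj => hφ x (mem_filter.1 hx).1 y (mem_filter.1 hy).1 hadj
          ((mem_filter.1 hx).2.trans (mem_filter.1 hy).2.symm)
    _ = K * m := by simp

end Coloring

section AngleGraph

variable {V P : Type*} [NormedAddCommGroup V] [InnerProductSpace ℝ V] [MetricSpace P]
  [NormedAddTorsor V P]

theorem EuclideanGeometry.dist_lt_of_angle_lt_pi_div_three {x y z : P} (hxz : x ≠ z)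
    (hle : dist x z ≤ dist y z) (hangle : ∠ y z x < π / 3) : dist y x < dist y z := by
  have hcos : 1 / 2 < cos (∠ y z x) := by
    rw [← cos_pi_div_three]
    exact cos_lt_cos_of_nonneg_of_le_pi (angle_nonneg _ _ _) (by linarith [pi_pos]) hangle
  have hx : 0 < dist x z := dist_pos.2 hxz
  have hsq : dist y x ^ 2 < dist y z ^ 2 := by
    nlinarith [law_cos y z x, mul_pos hx (hx.trans_le hle)]
  exact lt_of_pow_lt_pow_left₀ 2 dist_nonneg hsq

def EuclideanGeometry.angleGraph (z : P) (θ : ℝ) : SimpleGraph P where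
  Adj x y := x ≠ y ∧ ∠ x z y < θ
  symm := ⟨fun x y h => ⟨h.1.symm, angle_comm x z y ▸ h.2⟩⟩
  loopless := ⟨fun _ h => h.1 rfl⟩

theorem EuclideanGeometry.le_angle_of_isIndepSet_angleGraph {z : P} {θ : ℝ} {s : Set P}
    (hs : (angleGraph z θ).IsIndepSet s) {x y : P} (hx : x ∈ s) (hy : y ∈ s) (hxy : x ≠ y) :
    θ ≤ ∠ x z y :=
  not_lt.1 fun h => hs hx hy hxy ⟨hxy, h⟩

end AngleGraph

namespace InnerProductGeometry

section Cone

variable {E : Type*} [NormedAddCommGroup E] [InnerProductSpace ℝ E]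

def circularCone (v : E) (θ : ℝ) : Set E := {w | cos θ * (‖v‖ * ‖w‖) ≤ ⟪v, w⟫}

def openCircularCone (v : E) (θ : ℝ) : Set E := {w | cos θ * (‖v‖ * ‖w‖) < ⟪v, w⟫}

variable {v v' : E} {θ : ℝ}

theorem isClosed_circularCone : IsClosed (circularCone v θ) :=
  isClosed_le (by fun_prop) (by fun_prop)

theorem isOpen_openCircularCone : IsOpen (openCircularCone v θ) :=
  isOpen_lt (by fun_prop) (by fun_prop)

theorem openCircularCone_subset_circularCone : openCircularCone v θ ⊆ circularCone v θ :=
  Set.ofPred_subset_ofPred.2 fun _ => le_of_lt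

theorem angle_lt_of_mem_openCircularCone (hθ : 0 ≤ θ) {w : E} (hw : w ∈ openCircularCone v θ) :
    angle v w < θ := by
  by_contra! h
  have hcos : cos (angle v w) ≤ cos θ := cos_le_cos_of_nonneg_of_le_pi hθ (angle_le_pi v w) h
  have : cos θ * (‖v‖ * ‖w‖) < cos (angle v w) * (‖v‖ * ‖w‖) :=
    (cos_angle_mul_norm_mul_norm v w).symm ▸ hw
  exact hcos.not_gt (lt_of_mul_lt_mul_right this (by positivity))

theorem disjoint_openCircularCone (hθ : 0 ≤ θ) (h : 2 * θ ≤ angle v v') :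
    Disjoint (openCircularCone v θ) (openCircularCone v' θ) := by
  refine Set.disjoint_left.2 fun w hw hw' => ?_
  have := angle_le_angle_add_angle v w v'
  rw [angle_comm w v'] at this
  linarith [angle_lt_of_mem_openCircularCone hθ hw, angle_lt_of_mem_openCircularCone hθ hw']

theorem circularCone_smul_of_pos {t : ℝ} (ht : 0 < t) :
    circularCone (t • v) θ = circularCone v θ := by
  ext w
  simp only [circularCone, Set.mem_ofPred_eq, norm_smul, norm_of_nonneg ht.le, real_inner_smul_left]
  rw [show cos θ * (t * ‖v‖ * ‖w‖) = t * (cos θ * (‖v‖ * ‖w‖)) by ring, mul_le_mul_iff_right₀ ht]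

theorem preimage_circularCone (R : E ≃ₗᵢ[ℝ] E) : R ⁻¹' circularCone (R v) θ = circularCone v θ := by
  ext w
  simp [circularCone, LinearIsometryEquiv.inner_map_map]

theorem convex_circularCone (hθ : 0 ≤ cos θ) : Convex ℝ (circularCone v θ) := by
  intro w₁ hw₁ w₂ hw₂ s t hs ht _
  have hnorm : ‖s • w₁ + t • w₂‖ ≤ s * ‖w₁‖ + t * ‖w₂‖ := by
    simpa [norm_smul, norm_of_nonneg hs, norm_of_nonneg ht] using norm_add_le (s • w₁) (t • w₂)
  simp only [circularCone, Set.mem_ofPred_eq, inner_add_right, real_inner_smul_right] at *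
  nlinarith [mul_le_mul_of_nonneg_left hw₁ hs, mul_le_mul_of_nonneg_left hw₂ ht,
    mul_le_mul_of_nonneg_left hnorm (mul_nonneg hθ (norm_nonneg v))]

theorem circularCone_diff_subset_frontier (hv : v ≠ 0) (hθ₀ : 0 ≤ cos θ) (hθ : cos θ < 1) :
    circularCone v θ \ openCircularCone v θ ⊆ frontier (circularCone v θ) := by
  rintro w ⟨hw, hw'⟩
  have heq : cos θ * (‖v‖ * ‖w‖) = ⟪v, w⟫ := le_antisymm hw (not_lt.1 hw')
  refine ⟨subset_closure hw, fun hint => ?_⟩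
  -- on the boundary, `w - ε • v` leaves the cone for every `ε > 0` because `cos θ < 1`
  have hlim : Filter.Tendsto (fun ε : ℝ => w - ε • v) (nhdsWithin 0 (Set.Ioi 0)) (nhds w) := by
    have : Continuous fun ε : ℝ => w - ε • v := by fun_prop
    simpa using (this.tendsto 0).mono_left nhdsWithin_le_nhds
  obtain ⟨ε, hε, hεpos⟩ :=
    ((hlim.eventually (mem_interior_iff_mem_nhds.1 hint)).and self_mem_nhdsWithin).exists
  have htri : ‖w‖ ≤ ‖w - ε • v‖ + ε * ‖v‖ := by
    simpa [norm_smul, norm_of_nonneg (le_of_lt hεpos)] using norm_le_norm_sub_add w (ε • v)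
  simp only [inner_sub_right, real_inner_smul_right, real_inner_self_eq_norm_sq] at hε
  have hvpos : 0 < ‖v‖ := norm_pos_iff.2 hv
  nlinarith [mul_le_mul_of_nonneg_left htri (mul_nonneg hθ₀ hvpos.le),
    mul_pos hεpos (mul_pos hvpos hvpos)]

section Volume

variable [FiniteDimensional ℝ E] [MeasurableSpace E] [BorelSpace E]

theorem volume_circularCone_diff_openCircularCone (hv : v ≠ 0) (hθ₀ : 0 ≤ cos θ) (hθ : cos θ < 1) :
    volume (circularCone v θ \ openCircularCone v θ) = 0 :=
  measure_mono_null (circularCone_diff_subset_frontier hv hθ₀ hθ)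
    ((convex_circularCone hθ₀).addHaar_frontier volume)

theorem volume_openCircularCone_inter (s : Set E) (hv : v ≠ 0) (hθ₀ : 0 ≤ cos θ)
    (hθ : cos θ < 1) : volume (openCircularCone v θ ∩ s) = volume (circularCone v θ ∩ s) :=
  measure_eq_measure_of_null_sdiff
    (Set.inter_subset_inter_left _ openCircularCone_subset_circularCone)
    (measure_mono_null (fun _ hw => ⟨hw.1.1, fun h => hw.2 ⟨h, hw.1.2⟩⟩ :
      (circularCone v θ ∩ s) \ (openCircularCone v θ ∩ s) ⊆ circularCone v θ \ openCircularCone v θ)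
      (volume_circularCone_diff_openCircularCone hv hθ₀ hθ))

theorem volume_circularCone_inter_ball_congr (hv : v ≠ 0) (hv' : v' ≠ 0) :
    volume (circularCone v θ ∩ Metric.ball 0 1) = volume (circularCone v' θ ∩ Metric.ball 0 1) := by
  have ht : 0 < ‖v'‖ / ‖v‖ := div_pos (norm_pos_iff.2 hv') (norm_pos_iff.2 hv)
  have hnorm : ‖(‖v'‖ / ‖v‖) • v‖ = ‖v'‖ := by
    rw [norm_smul, norm_of_nonneg ht.le, div_mul_cancel₀ _ (norm_ne_zero_iff.2 hv)]
  set R := (ℝ ∙ ((‖v'‖ / ‖v‖) • v - v'))ᗮ.reflection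
  have hpre : R ⁻¹' (circularCone v' θ ∩ Metric.ball 0 1) = circularCone v θ ∩ Metric.ball 0 1 := by
    rw [Set.preimage_inter, ← Submodule.reflection_sub hnorm, preimage_circularCone,
      circularCone_smul_of_pos ht]
    ext w
    simp
  rw [← hpre, R.measurePreserving.measure_preimage
    (isClosed_circularCone.measurableSet.inter measurableSet_ball).nullMeasurableSet]

theorem volume_openCircularCone_inter_ball_pos (hv : v ≠ 0) (hθ : cos θ < 1) :
    0 < volume (openCircularCone v θ ∩ Metric.ball 0 1) := by
  have hv₀ : 0 < ‖v‖ := norm_pos_iff.2 hv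
  have hnorm : ‖(2 * ‖v‖)⁻¹ • v‖ = 1 / 2 := by
    rw [norm_smul, norm_inv, norm_mul, norm_of_nonneg hv₀.le]; field_simp; norm_num
  refine (isOpen_openCircularCone.inter Metric.isOpen_ball).measure_pos volume
    ⟨(2 * ‖v‖)⁻¹ • v, ?_, by rw [mem_ball_zero_iff, hnorm]; norm_num⟩
  show cos θ * (‖v‖ * ‖(2 * ‖v‖)⁻¹ • v‖) < ⟪v, (2 * ‖v‖)⁻¹ • v⟫
  rw [hnorm, real_inner_smul_right, real_inner_self_eq_norm_sq]
  field_simp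
  nlinarith

theorem card_le_of_covering_by_circularCones {ι : Type*} [Fintype ι] (hθ₀ : 0 < θ) (hθ : θ ≤ π / 2)
    {u : ι → E} (hu : ∀ i, u i ≠ 0) (hcover : ∀ w, ∃ i, w ∈ circularCone (u i) θ)
    {T : Finset E} (hT₀ : ∀ v ∈ T, v ≠ 0)
    (hT : (T : Set E).Pairwise fun v v' => 2 * θ ≤ angle v v') :
    #T ≤ Fintype.card ι := by
  rcases T.eq_empty_or_nonempty with rfl | ⟨v₀, hv₀⟩
  · simp
  have hcos₀ : 0 ≤ cos θ := cos_nonneg_of_mem_Icc ⟨by linarith [pi_pos], hθ⟩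
  have hcos₁ : cos θ < 1 := by
    simpa using cos_lt_cos_of_nonneg_of_le_pi le_rfl (by linarith [pi_pos]) hθ₀
  set B := Metric.ball (0 : E) 1
  set a := volume (circularCone v₀ θ ∩ B)
  have hcap : ∀ v ≠ 0, volume (circularCone v θ ∩ B) = a :=
    fun v hv => volume_circularCone_inter_ball_congr hv (hT₀ v₀ hv₀)
  have hopen : ∀ v ∈ T, volume (openCircularCone v θ ∩ B) = a := fun v hv => by
    rw [volume_openCircularCone_inter B (hT₀ v hv) hcos₀ hcos₁, hcap v (hT₀ v hv)]
  have ha₀ : a ≠ 0 := by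
    rw [← hopen v₀ hv₀]
    exact (volume_openCircularCone_inter_ball_pos (hT₀ v₀ hv₀) hcos₁).ne'
  have ha_top : a ≠ ⊤ :=
    ne_top_of_le_ne_top measure_ball_lt_top.ne (measure_mono Set.inter_subset_right)
  have hdisj : (T : Set E).PairwiseDisjoint fun v => openCircularCone v θ ∩ B :=
    fun v hv v' hv' hne => (disjoint_openCircularCone hθ₀.le (hT hv hv' hne)).mono
      Set.inter_subset_left Set.inter_subset_left
  refine Nat.cast_le.1 ((ENNReal.mul_le_mul_iff_left ha₀ ha_top).1 ?_)
  calc (#T : ENNReal) * a = ∑ v ∈ T, volume (openCircularCone v θ ∩ B) := by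
        simp [Finset.sum_congr rfl hopen]
    _ = volume (⋃ v ∈ T, openCircularCone v θ ∩ B) := (measure_biUnion_finset hdisj
        fun _ _ => (isOpen_openCircularCone.inter Metric.isOpen_ball).measurableSet).symm
    _ ≤ volume B := measure_mono (Set.iUnion₂_subset fun _ _ => Set.inter_subset_right)
    _ ≤ volume (⋃ i, circularCone (u i) θ ∩ B) := measure_mono fun w hw =>
        (hcover w).elim fun i hi => Set.mem_iUnion.2 ⟨i, hi, hw⟩
    _ ≤ ∑ i, volume (circularCone (u i) θ ∩ B) := measure_iUnion_fintype_le _ _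
    _ = Fintype.card ι * a := by simp [hcap _ (hu _)]

end Volume

end Cone

end InnerProductGeometry

theorem EuclideanGeometry.card_le_of_isIndepSet_angleGraph {E ι : Type*} [NormedAddCommGroup E]
    [InnerProductSpace ℝ E] [FiniteDimensional ℝ E] [MeasurableSpace E] [BorelSpace E]
    [Fintype ι] {θ : ℝ} (hθ₀ : 0 < θ) (hθ : θ ≤ π / 2) {u : ι → E} (hu : ∀ i, u i ≠ 0)
    (hcover : ∀ w, ∃ i, w ∈ circularCone (u i) θ) {z : E} {A : Finset E} (hz : z ∉ A)
    (hA : (angleGraph z (2 * θ)).IsIndepSet A) : #A ≤ Fintype.card ι := by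
  classical
  rw [← Finset.card_image_of_injective A (sub_left_injective (b := z))]
  refine card_le_of_covering_by_circularCones hθ₀ hθ hu hcover ?_ ?_
  · simpa [sub_eq_zero] using hz
  rintro _ hx' _ hy' hne
  obtain ⟨x, hx, rfl⟩ := mem_image.1 hx'
  obtain ⟨y, hy, rfl⟩ := mem_image.1 hy'
  exact le_angle_of_isIndepSet_angleGraph hA hx hy fun h => hne (h ▸ rfl)

theorem knn_in_degree_bound_general
    (d : ℕ) (γd K : ℕ)
    (u : Fin γd → EuclideanSpace ℝ (Fin d)) (hu : ∀ i, ‖u i‖ = 1)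
    (hcover : ∀ w : EuclideanSpace ℝ (Fin d),
      ∃ i, Real.cos (π / 6) * ‖w‖ ≤ inner ℝ (u i) w)
    (S : Finset (EuclideanSpace ℝ (Fin d))) (z : EuclideanSpace ℝ (Fin d)) :
    {y ∈ (S : Set (EuclideanSpace ℝ (Fin d))) | y ≠ z ∧
        ({x ∈ (S : Set (EuclideanSpace ℝ (Fin d))) | x ≠ y ∧
            dist y x < dist y z}.ncard < K)}.ncard ≤ K * γd := by
  classical
  have hncard : ∀ (p : EuclideanSpace ℝ (Fin d) → Prop) [DecidablePred p],
      {x ∈ (S : Set _) | p x}.ncard = #{x ∈ S | p x} := fun p _ => by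
    rw [← Set.ncard_coe_finset, Finset.coe_filter]; rfl
  simp only [hncard]
  refine (EuclideanGeometry.angleGraph z (π / 3)).card_le_mul_of_card_lowerAdj_lt
    (fun y => dist y z) _ (fun y hy => ?_) (fun A hA hA_indep => ?_)
  · refine (Finset.card_le_card fun x hx => ?_).trans_lt (mem_filter.1 hy).2.2
    obtain ⟨hxB, ⟨hyx, hangle⟩, hle⟩ := mem_filter.1 hx
    exact mem_filter.2 ⟨(mem_filter.1 hxB).1, hyx.symm,
      EuclideanGeometry.dist_lt_of_angle_lt_pi_div_three (mem_filter.1 hxB).2.1 hle hangle⟩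
  have hAz : z ∉ A := fun hz => (mem_filter.1 (hA hz)).2.1 rfl
  refine (EuclideanGeometry.card_le_of_isIndepSet_angleGraph (θ := π / 6) (u := u) (by positivity)
    (by linarith [pi_pos]) (fun i => norm_ne_zero_iff.1 (by simp [hu]))
    (fun w => by simpa [circularCone, hu] using hcover w) hAz ?_).trans_eq (Fintype.card_fin γd)
  rwa [show 2 * (π / 6) = π / 3 by ring]

/-- In `ℝ^d`, if `γd` cones of half-angle `π/6` with apex at the
origin cover `ℝ^d`, then any fixed point `z` can be among the `K` nearest
neighbors (in Euclidean distance) of at most `K γd` points of a finite set `S`;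
here "`z` is among the `K` nearest neighbors of `y`" means fewer than `K` points
of `S \ {y}` are strictly closer to `y` than `z` is. -/
theorem knn_in_degree_bound
    (d : ℕ) (γd K : ℕ) (hK : 1 ≤ K)
    (u : Fin γd → EuclideanSpace ℝ (Fin d)) (hu : ∀ i, ‖u i‖ = 1)
    (hcover : ∀ w : EuclideanSpace ℝ (Fin d),
      ∃ i, Real.cos (π / 6) * ‖w‖ ≤ inner ℝ (u i) w)
    (S : Finset (EuclideanSpace ℝ (Fin d))) (z : EuclideanSpace ℝ (Fin d))
    (hz : z ∈ S) :
    {y ∈ (S : Set (EuclideanSpace ℝ (Fin d))) | y ≠ z ∧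
        ({x ∈ (S : Set (EuclideanSpace ℝ (Fin d))) | x ≠ y ∧
            dist y x < dist y z}.ncard < K)}.ncard ≤ K * γd :=
  knn_in_degree_bound_general d γd K u hu hcover S z
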